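/- arXiv:2109.06829 — 2 statements merged into one kernel-verified Lean document; each statement's English description precedes it below -/
import Mathlib

section
/- For every even positive integer ℓ and every real number t, the truncated exponential E_ℓ(t) = Σ_{j ≤ ℓ} t^j / j! is strictly positive. Moreover, if t ≤ ℓ/e², then e^t ≤ (1 + e^{-ℓ}) · E_ℓ(t). -/
/-!
For `t ≤ 0` the error `exp t - E_n t` has the sign of `(-1)^(n+1)`: its derivative is the error
of `E_{n-1}`, and it vanishes at `0`. So for even `ℓ` we get `0 < exp t ≤ E_ℓ t` on `t ≤ 0`,
while `E_ℓ t ≥ 1` on `t ≥ 0`. For `0 ≤ t ≤ ℓ/e²` the tail of the exponential series is at most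
twice its first term `t^(ℓ+1)/(ℓ+1)!`, and `(ℓ+1)^(ℓ+1)/(ℓ+1)! ≤ e^(ℓ+1)` bounds that term by
`e^(-(ℓ+1))`; as `2/e ≤ 1` the tail is at most `e^(-ℓ) ≤ e^(-ℓ) E_ℓ t`.
-/

open Finset Real
open scoped Nat

noncomputable def expTaylor (n : ℕ) (t : ℝ) : ℝ :=
  ∑ j ∈ Finset.range (n + 1), t ^ j / (Nat.factorial j)

lemma expTaylor_zero_right (n : ℕ) : expTaylor n 0 = 1 := by
  simp [expTaylor, sum_range_succ']

lemma hasDerivAt_expTaylor_succ (n : ℕ) (t : ℝ) :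
    HasDerivAt (expTaylor (n + 1)) (expTaylor n t) t := by
  have h : HasDerivAt (expTaylor (n + 1))
      (∑ j ∈ range (n + 2), (j : ℝ) * t ^ (j - 1) / j !) t :=
    HasDerivAt.fun_sum fun j _ => (hasDerivAt_pow j t).div_const _
  convert h using 1
  rw [sum_range_succ']
  simp only [Nat.cast_zero, zero_mul, zero_div, add_zero, Nat.add_sub_cancel]
  refine sum_congr rfl fun j _ => ?_
  rw [Nat.factorial_succ]
  push_cast
  field_simp

lemma neg_one_pow_mul_expTaylor_sub_exp_nonneg (n : ℕ) {t : ℝ} (ht : t ≤ 0) :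
    0 ≤ (-1) ^ n * (expTaylor n t - exp t) := by
  induction n generalizing t with
  | zero => simpa [expTaylor] using exp_le_one_iff.mpr ht
  | succ n ih =>
    set g : ℝ → ℝ := fun s => (-1) ^ (n + 1) * (expTaylor (n + 1) s - exp s)
    have hg : ∀ s, HasDerivAt g ((-1) ^ (n + 1) * (expTaylor n s - exp s)) s := fun s =>
      ((hasDerivAt_expTaylor_succ n s).sub (hasDerivAt_exp s)).const_mul _
    have hderiv_nonpos : ∀ s ≤ 0, (-1) ^ (n + 1) * (expTaylor n s - exp s) ≤ 0 := fun s hs => by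
      linarith [ih hs, show (-1 : ℝ) ^ (n + 1) * (expTaylor n s - exp s) =
        -((-1) ^ n * (expTaylor n s - exp s)) by ring]
    have hanti : AntitoneOn g (Set.Iic 0) :=
      antitoneOn_of_hasDerivWithinAt_nonpos (convex_Iic 0)
        (fun s _ => (hg s).continuousAt.continuousWithinAt)
        (fun s _ => (hg s).hasDerivWithinAt)
        (fun s hs => hderiv_nonpos s (interior_subset (s := Set.Iic 0) hs))
    have hg0 : g 0 = 0 := by simp [g, expTaylor_zero_right]
    simpa [g, hg0] using hanti ht (Set.mem_Iic.mpr le_rfl) ht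

lemma exp_le_expTaylor_of_even {n : ℕ} (hn : Even n) {t : ℝ} (ht : t ≤ 0) :
    exp t ≤ expTaylor n t := by
  simpa [hn.neg_one_pow] using neg_one_pow_mul_expTaylor_sub_exp_nonneg n ht

lemma one_le_expTaylor (n : ℕ) {t : ℝ} (ht : 0 ≤ t) : 1 ≤ expTaylor n t := by
  unfold expTaylor
  simpa using single_le_sum (f := fun j => t ^ j / (j ! : ℝ))
    (fun j _ => by positivity) (mem_range.mpr n.succ_pos)

lemma expTaylor_pos_of_even {n : ℕ} (hn : Even n) (t : ℝ) : 0 < expTaylor n t := by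
  rcases le_total t 0 with ht | ht
  · exact (exp_pos t).trans_le (exp_le_expTaylor_of_even hn ht)
  · exact one_pos.trans_le (one_le_expTaylor n ht)

lemma Real.abs_exp_sub_sum_range_le {x : ℝ} {n : ℕ} (hx : |x| / n.succ ≤ 1 / 2) :
    |exp x - ∑ m ∈ range n, x ^ m / m !| ≤ |x| ^ n / n ! * 2 := by
  have hxc : ‖(x : ℂ)‖ / n.succ ≤ 1 / 2 := mod_cast hx
  exact_mod_cast Complex.exp_bound' hxc

lemma pow_div_factorial_le_exp_neg {n : ℕ} {x : ℝ} (hx0 : 0 ≤ x) (hx : x ≤ n / exp 2) :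
    x ^ n / n ! ≤ exp (-n) :=
  calc x ^ n / n ! ≤ (n / exp 2) ^ n / n ! := by gcongr
    _ = (n : ℝ) ^ n / n ! * exp (-2 * n) := by
      rw [div_pow, ← exp_nat_mul, neg_mul, exp_neg]
      ring_nf
    _ ≤ exp n * exp (-2 * n) := by gcongr; exact pow_div_factorial_le_exp _ n.cast_nonneg n
    _ = exp (-n) := by rw [← exp_add]; ring_nf

lemma exp_sub_expTaylor_le {n : ℕ} {t : ℝ} (ht0 : 0 ≤ t) (ht : t ≤ n / exp 2) :
    exp t - expTaylor n t ≤ exp (-n) := by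
  have h3e : 3 ≤ exp 2 := by linarith [add_one_le_exp (2 : ℝ)]
  have h2e : 2 ≤ exp 1 := by linarith [add_one_le_exp (1 : ℝ)]
  have ht' : t ≤ (n + 1 : ℕ) / exp 2 := ht.trans (by gcongr; simp)
  have hhalf : |t| / (n + 1).succ ≤ 1 / 2 := by
    have : t ≤ n / 2 := ht.trans (div_le_div_of_nonneg_left n.cast_nonneg two_pos (by linarith))
    rw [abs_of_nonneg ht0, div_le_iff₀ (by positivity)]
    push_cast
    linarith
  have htail : |exp t - expTaylor n t| ≤ t ^ (n + 1) / (n + 1)! * 2 := by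
    have h := Real.abs_exp_sub_sum_range_le hhalf
    rwa [abs_of_nonneg ht0] at h
  calc exp t - expTaylor n t ≤ t ^ (n + 1) / (n + 1)! * 2 := (le_abs_self _).trans htail
    _ ≤ exp (-(n + 1 : ℕ)) * 2 := by gcongr; exact pow_div_factorial_le_exp_neg ht0 ht'
    _ = exp (-n) * (2 / exp 1) := by
      rw [Nat.cast_succ, neg_add, exp_add, exp_neg 1]
      ring
    _ ≤ exp (-n) := mul_le_of_le_one_right (exp_pos _).le ((div_le_one (exp_pos 1)).mpr h2e)

theorem stmt2_general (ℓ : ℕ) (hev : Even ℓ) (t : ℝ) :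
    0 < ∑ j ∈ Finset.range (ℓ + 1), t ^ j / (Nat.factorial j) ∧
    (t ≤ (ℓ : ℝ) / Real.exp 2 →
      Real.exp t ≤ (1 + Real.exp (-(ℓ : ℝ))) *
        ∑ j ∈ Finset.range (ℓ + 1), t ^ j / (Nat.factorial j)) := by
  change 0 < expTaylor ℓ t ∧ (t ≤ ℓ / exp 2 → exp t ≤ (1 + exp (-ℓ)) * expTaylor ℓ t)
  have hpos := expTaylor_pos_of_even hev t
  refine ⟨hpos, fun ht => ?_⟩
  rcases le_total t 0 with ht0 | ht0
  · calc exp t ≤ expTaylor ℓ t := exp_le_expTaylor_of_even hev ht0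
      _ ≤ (1 + exp (-ℓ)) * expTaylor ℓ t :=
        le_mul_of_one_le_left hpos.le (le_add_of_nonneg_right (exp_pos _).le)
  · calc exp t ≤ expTaylor ℓ t + exp (-ℓ) := by linarith [exp_sub_expTaylor_le ht0 ht]
      _ ≤ expTaylor ℓ t + exp (-ℓ) * expTaylor ℓ t := by
        gcongr
        exact le_mul_of_one_le_right (exp_pos _).le (one_le_expTaylor ℓ ht0)
      _ = (1 + exp (-ℓ)) * expTaylor ℓ t := by ring

/-- For every even positive integer `ℓ` and real `t`, the truncated exponential
`E_ℓ(t) = ∑_{j ≤ ℓ} t^j/j!` is strictly positive; moreover if `t ≤ ℓ/e²` then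
`e^t ≤ (1 + e^{-ℓ}) E_ℓ(t)`. -/
theorem stmt2 (ℓ : ℕ) (hℓ : 0 < ℓ) (hev : Even ℓ) (t : ℝ) :
    0 < ∑ j ∈ Finset.range (ℓ + 1), t ^ j / (Nat.factorial j) ∧
    (t ≤ (ℓ : ℝ) / Real.exp 2 →
      Real.exp t ≤ (1 + Real.exp (-(ℓ : ℝ))) *
        ∑ j ∈ Finset.range (ℓ + 1), t ^ j / (Nat.factorial j)) :=
  stmt2_general ℓ hev t
end

section
/- Let I be a finite set of primes, a a real-valued completely multiplicative function, χ a completely multiplicative function taking values on the unit circle, ν as above, and k a nonzero real. Then for any even positive integer ℓ, the truncated exponential satisfies E_ℓ(2k·Re(P_I(χ;a))) = Σ_{n : p|n ⇒ p ∈ I, Ω(n) ≤ ℓ} k^{Ω(n)} a(n)/√n · (νχ ∗ ν·conj(χ))(n), where (νχ ∗ ν conj(χ))(n) = Σ_{de = n} ν(d)χ(d)ν(e)conj(χ(e)) and E_ℓ(t) = Σ_{j ≤ ℓ} t^j/j!. -/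
/-!
Since `2 Re P = P + conj P`, the binomial theorem gives
`E_ℓ(2k Re P) = ∑_{r+s ≤ ℓ} (kP)^r/r! · (k conj P)^s/s!`. By the multinomial theorem
`P^r/r!` is the sum of `ν(n) a(n) χ(n)/√n` over the `I`-smooth `n` with `Ω(n) = r`, the
multinomial coefficient being absorbed by `ν`. Multiplying out and grouping the pairs `(d, e)`
by `n = d e` (so that `Ω(n) = r + s`) gives the convolution on the right.
-/

open scoped Classical

open ArithmeticFunction
open scoped ArithmeticFunction.Omega

/-- The multiplicative function `ν` with `ν(p^a) = 1/a!`. -/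
noncomputable def nu (n : ℕ) : ℝ :=
  ∏ p ∈ n.primeFactors, (1 : ℝ) / (Nat.factorial (n.factorization p))

open Finset Nat

section Smooth

variable {I : Finset ℕ}

lemma factorization_prod_pow_of_support_subset (hI : ∀ p ∈ I, p.Prime) {u : ℕ → ℕ}
    (hu : ∀ p, u p ≠ 0 → p ∈ I) : ⇑(∏ p ∈ I, p ^ u p).factorization = u := by
  funext q
  rw [Nat.factorization_prod fun p hp => pow_ne_zero _ (hI p hp).ne_zero,
    Finsupp.finsetSum_apply,
    sum_congr rfl fun p hp => by rw [(hI p hp).factorization_pow, Finsupp.single_apply],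
    sum_ite_eq']
  split_ifs with hq
  · rfl
  · exact (not_imp_comm.1 (hu q) hq).symm

lemma prod_pow_factorization_of_primeFactors_subset {n : ℕ} (hn : n ≠ 0)
    (h : n.primeFactors ⊆ I) : ∏ p ∈ I, p ^ n.factorization p = n := by
  conv_rhs => rw [← Nat.prod_factorization_pow_eq_self hn]
  exact (Finsupp.prod_of_support_subset _ (by simpa using h) _ fun _ _ => pow_zero _).symm

lemma cardFactors_eq_sum_of_primeFactors_subset {n : ℕ} (h : n.primeFactors ⊆ I) :
    Ω n = ∑ p ∈ I, n.factorization p := by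
  rw [cardFactors_eq_sum_factorization]
  exact Finsupp.sum_of_support_subset _ (by simpa using h) _ fun _ _ => rfl

lemma nu_eq_prod_of_primeFactors_subset {n : ℕ} (h : n.primeFactors ⊆ I) :
    nu n = ∏ p ∈ I, (1 : ℝ) / (n.factorization p)! :=
  prod_subset h fun p _ hp => by
    rw [Finsupp.notMem_support_iff.1 (by simpa using hp), factorial_zero, cast_one, div_one]

def smoothOfDegree (I : Finset ℕ) (r : ℕ) : Finset ℕ :=
  (I.piAntidiag r).image fun u : ℕ → ℕ => ∏ p ∈ I, p ^ u p

lemma injOn_prod_pow_piAntidiag (hI : ∀ p ∈ I, p.Prime) (r : ℕ) :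
    Set.InjOn (fun u : ℕ → ℕ => ∏ p ∈ I, p ^ u p) (I.piAntidiag r) := fun u hu v hv huv => by
  rw [← factorization_prod_pow_of_support_subset hI (mem_piAntidiag.1 hu).2,
    ← factorization_prod_pow_of_support_subset hI (mem_piAntidiag.1 hv).2]
  exact congrArg (fun n : ℕ => ⇑n.factorization) huv

lemma mem_smoothOfDegree (hI : ∀ p ∈ I, p.Prime) {r n : ℕ} :
    n ∈ smoothOfDegree I r ↔ n ≠ 0 ∧ n.primeFactors ⊆ I ∧ Ω n = r := by
  constructor
  · simp only [smoothOfDegree, mem_image, mem_piAntidiag]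
    rintro ⟨u, ⟨rfl, hu⟩, rfl⟩
    have hfac := factorization_prod_pow_of_support_subset hI hu
    have hsupp : (∏ p ∈ I, p ^ u p).primeFactors ⊆ I := fun p hp =>
      hu p (by rwa [← support_factorization, Finsupp.mem_support_iff, hfac] at hp)
    refine ⟨prod_ne_zero_iff.2 fun p hp => pow_ne_zero _ (hI p hp).ne_zero, hsupp, ?_⟩
    rw [cardFactors_eq_sum_of_primeFactors_subset hsupp, hfac]
  · rintro ⟨hn, hnI, rfl⟩
    refine mem_image.2 ⟨n.factorization, mem_piAntidiag.2 ⟨?_, fun p hp => ?_⟩,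
      prod_pow_factorization_of_primeFactors_subset hn hnI⟩
    · exact (cardFactors_eq_sum_of_primeFactors_subset hnI).symm
    · exact hnI (Finsupp.mem_support_iff.2 hp)

lemma cardFactors_of_mem_smoothOfDegree (hI : ∀ p ∈ I, p.Prime) {r n : ℕ}
    (h : n ∈ smoothOfDegree I r) : Ω n = r :=
  ((mem_smoothOfDegree hI).1 h).2.2

lemma pow_div_factorial_eq_sum_smoothOfDegree (hI : ∀ p ∈ I, p.Prime) (h : ℕ →* ℂ) (c : ℂ)
    (r : ℕ) : (c * ∑ p ∈ I, h p) ^ r / r ! = ∑ n ∈ smoothOfDegree I r, c ^ Ω n * nu n * h n := by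
  rw [smoothOfDegree, sum_image (injOn_prod_pow_piAntidiag hI r), mul_pow,
    sum_pow_eq_sum_piAntidiag, mul_sum, sum_div]
  refine sum_congr rfl fun u hu => ?_
  obtain ⟨-, hnI, hΩ⟩ := (mem_smoothOfDegree hI).1 (mem_image_of_mem _ hu)
  obtain ⟨hr, hsupp⟩ := mem_piAntidiag.1 hu
  have hnu : (nu (∏ p ∈ I, p ^ u p) : ℂ) = 1 / ∏ p ∈ I, ((u p)! : ℂ) := by
    rw [nu_eq_prod_of_primeFactors_subset hnI, factorization_prod_pow_of_support_subset hI hsupp]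
    push_cast
    rw [prod_div_distrib, prod_const_one]
  have hspec : (∏ p ∈ I, ((u p)! : ℂ)) * multinomial I u = r ! := by
    rw [← hr]; exact_mod_cast multinomial_spec I u
  have hfac : (∏ p ∈ I, ((u p)! : ℂ)) ≠ 0 :=
    prod_ne_zero_iff.2 fun p _ => cast_ne_zero.2 (factorial_ne_zero _)
  have hmult : (multinomial I u : ℂ) ≠ 0 := cast_ne_zero.2 (multinomial_pos I u).ne'
  rw [hΩ, hnu, map_prod, ← hspec]
  simp only [map_pow]
  field_simp

lemma mul_mem_smoothOfDegree_iff (hI : ∀ p ∈ I, p.Prime) {d e j : ℕ} :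
    d * e ∈ smoothOfDegree I j ↔
      d ∈ smoothOfDegree I (Ω d) ∧ e ∈ smoothOfDegree I (Ω e) ∧ Ω d + Ω e = j := by
  simp only [mem_smoothOfDegree hI, mul_ne_zero_iff, and_true]
  constructor
  · rintro ⟨⟨hd, he⟩, hI', rfl⟩
    rw [primeFactors_mul hd he, union_subset_iff] at hI'
    exact ⟨⟨hd, hI'.1⟩, ⟨he, hI'.2⟩, (cardFactors_mul hd he).symm⟩
  · rintro ⟨⟨hd, hdI⟩, ⟨he, heI⟩, rfl⟩
    exact ⟨⟨hd, he⟩, by rw [primeFactors_mul hd he]; exact union_subset hdI heI,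
      cardFactors_mul hd he⟩

/-- Both sides run over the pairs `(d, e)` of `I`-smooth numbers with `Ω d + Ω e = j`. -/
lemma sum_smoothOfDegree_divisorsAntidiagonal (hI : ∀ p ∈ I, p.Prime) {R : Type*}
    [CommSemiring R] (A B : ℕ → R) (j : ℕ) :
    ∑ n ∈ smoothOfDegree I j, ∑ x ∈ n.divisorsAntidiagonal, A x.1 * B x.2 =
      ∑ x ∈ antidiagonal j,
        (∑ d ∈ smoothOfDegree I x.1, A d) * ∑ e ∈ smoothOfDegree I x.2, B e := by
  simp_rw [sum_mul_sum, ← sum_product']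
  rw [sum_sigma', sum_sigma']
  refine sum_nbij' (fun x => ⟨(Ω x.2.1, Ω x.2.2), x.2⟩) (fun x => ⟨x.2.1 * x.2.2, x.2⟩)
    ?_ ?_ ?_ ?_ fun _ _ => rfl
  · rintro ⟨n, d, e⟩ hx
    simp only [mem_sigma, mem_divisorsAntidiagonal] at hx
    obtain ⟨hn, rfl, -⟩ := hx
    obtain ⟨hd, he, hde⟩ := (mul_mem_smoothOfDegree_iff hI).1 hn
    simp [hd, he, hde]
  · rintro ⟨⟨r, s⟩, d, e⟩ hx
    simp only [mem_sigma, HasAntidiagonal.mem_antidiagonal, mem_product] at hx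
    obtain ⟨rfl, hd, he⟩ := hx
    obtain rfl := cardFactors_of_mem_smoothOfDegree hI hd
    obtain rfl := cardFactors_of_mem_smoothOfDegree hI he
    have hde := (mul_mem_smoothOfDegree_iff hI).2 ⟨hd, he, rfl⟩
    simpa [hde] using ((mem_smoothOfDegree hI).1 hde).1
  · rintro ⟨n, d, e⟩ hx
    simp only [mem_sigma, mem_divisorsAntidiagonal] at hx
    obtain ⟨-, rfl, -⟩ := hx
    rfl
  · rintro ⟨⟨r, s⟩, d, e⟩ hx
    simp only [mem_sigma, mem_product] at hx
    obtain ⟨-, hd, he⟩ := hx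
    rw [cardFactors_of_mem_smoothOfDegree hI hd, cardFactors_of_mem_smoothOfDegree hI he]

lemma tsum_ite_eq_sum_smoothOfDegree (hI : ∀ p ∈ I, p.Prime) {M : Type*} [AddCommMonoid M]
    [TopologicalSpace M] (T : ℕ → M) (ℓ : ℕ) :
    (∑' n : ℕ, if 0 < n ∧ (∀ p : ℕ, p.Prime → p ∣ n → p ∈ I) ∧ Ω n ≤ ℓ then T n else 0) =
      ∑ j ∈ range (ℓ + 1), ∑ n ∈ smoothOfDegree I j, T n := by
  have hmem : ∀ n, (0 < n ∧ (∀ p : ℕ, p.Prime → p ∣ n → p ∈ I) ∧ Ω n ≤ ℓ) ↔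
      n ∈ (range (ℓ + 1)).biUnion (smoothOfDegree I) := by
    intro n
    simp only [mem_biUnion, mem_range, mem_smoothOfDegree hI, subset_iff, mem_primeFactors]
    constructor
    · rintro ⟨hn, hI', hΩ⟩
      exact ⟨Ω n, by omega, hn.ne', fun p ⟨hp, hpn, _⟩ => hI' p hp hpn, rfl⟩
    · rintro ⟨j, hj, hn, hI', rfl⟩
      exact ⟨pos_of_ne_zero hn, fun p hp hpn => hI' ⟨hp, hpn, hn⟩, by omega⟩
  have hdisj : (range (ℓ + 1) : Set ℕ).PairwiseDisjoint (smoothOfDegree I) :=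
    fun r _ s _ hrs => disjoint_left.2 fun n hr hs =>
      hrs ((cardFactors_of_mem_smoothOfDegree hI hr).symm.trans
        (cardFactors_of_mem_smoothOfDegree hI hs))
  rw [← sum_biUnion hdisj, tsum_eq_sum fun n hn => if_neg (mt (hmem n).1 hn)]
  exact sum_congr rfl fun n hn => if_pos ((hmem n).2 hn)

end Smooth

lemma add_pow_div_factorial {K : Type*} [Field K] [CharZero K] (x y : K) (j : ℕ) :
    (x + y) ^ j / j ! = ∑ m ∈ antidiagonal j, x ^ m.1 / m.1 ! * (y ^ m.2 / m.2 !) := by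
  rw [(Commute.all x y).add_pow', sum_div]
  refine sum_congr rfl fun m hm => ?_
  rw [← HasAntidiagonal.mem_antidiagonal.1 hm, nsmul_eq_mul, cast_add_choose]
  have : ((m.1 + m.2)! : K) ≠ 0 := cast_ne_zero.2 (factorial_ne_zero _)
  field_simp

noncomputable def divSqrtHom (a : ℕ →* ℝ) (χ : ℕ →* ℂ) : ℕ →* ℂ where
  toFun n := a n * χ n / Real.sqrt n
  map_one' := by simp
  map_mul' m n := by
    simp only [map_mul, cast_mul, Real.sqrt_mul (cast_nonneg _)]
    push_cast
    ring

lemma divSqrtHom_mul_divSqrtHom (a : ℕ →* ℝ) (χ ψ : ℕ →* ℂ) (d e : ℕ) :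
    divSqrtHom a χ d * divSqrtHom a ψ e =
      a (d * e) / Real.sqrt (d * e : ℕ) * (χ d * ψ e) := by
  simp only [divSqrtHom, MonoidHom.coe_mk, OneHom.coe_mk, map_mul, cast_mul,
    Real.sqrt_mul (cast_nonneg _)]
  push_cast
  ring

lemma mul_sum_divisors_eq_sum_divisorsAntidiagonal (a : ℕ →* ℝ) (χ : ℕ →* ℂ) (k : ℝ)
    {n : ℕ} (hn : n ≠ 0) :
    ((k ^ Ω n * a n : ℝ) : ℂ) / (Real.sqrt n : ℂ) *
        ∑ d ∈ n.divisors, (nu d : ℂ) * χ d * (nu (n / d) : ℂ) * (starRingEnd ℂ) (χ (n / d)) =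
      ∑ x ∈ n.divisorsAntidiagonal,
        (k : ℂ) ^ Ω x.1 * nu x.1 * divSqrtHom a χ x.1 *
          ((k : ℂ) ^ Ω x.2 * nu x.2 * divSqrtHom a ((starRingEnd ℂ).toMonoidHom.comp χ) x.2) := by
  set ψ : ℕ →* ℂ := (starRingEnd ℂ).toMonoidHom.comp χ
  rw [← Nat.sum_divisorsAntidiagonal fun d e =>
    (nu d : ℂ) * χ d * (nu e : ℂ) * (starRingEnd ℂ) (χ e), mul_sum]
  refine sum_congr rfl fun x hx => ?_
  obtain ⟨rfl, -⟩ := mem_divisorsAntidiagonal.1 hx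
  obtain ⟨hd, he⟩ := mul_ne_zero_iff.1 hn
  calc _ = (k : ℂ) ^ Ω x.1 * nu x.1 * ((k : ℂ) ^ Ω x.2 * nu x.2) *
        (a (x.1 * x.2) / Real.sqrt (x.1 * x.2 : ℕ) * (χ x.1 * (starRingEnd ℂ) (χ x.2))) := by
        rw [cardFactors_mul hd he]; push_cast; ring
    _ = (k : ℂ) ^ Ω x.1 * nu x.1 * ((k : ℂ) ^ Ω x.2 * nu x.2) *
        (divSqrtHom a χ x.1 * divSqrtHom a ψ x.2) := by rw [divSqrtHom_mul_divSqrtHom]; rfl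
    _ = _ := by ring

theorem stmt9_general (I : Finset ℕ) (hI : ∀ p ∈ I, p.Prime)
    (a : ℕ → ℝ) (ha1 : a 1 = 1) (hamul : ∀ m n : ℕ, a (m * n) = a m * a n)
    (χ : ℕ → ℂ) (hχ1 : χ 1 = 1) (hχmul : ∀ m n : ℕ, χ (m * n) = χ m * χ n)
    (k : ℝ) (ℓ : ℕ) :
    ((∑ j ∈ Finset.range (ℓ + 1),
        (2 * k * (∑ p ∈ I, (a p : ℂ) * χ p / (Real.sqrt p : ℂ)).re) ^ j /
          (Nat.factorial j) : ℝ) : ℂ)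
      = ∑' n : ℕ, if 0 < n ∧ (∀ p : ℕ, p.Prime → p ∣ n → p ∈ I) ∧ Ω n ≤ ℓ then
          ((k ^ (Ω n) * a n : ℝ) : ℂ) / (Real.sqrt n : ℂ) *
            ∑ d ∈ n.divisors, (nu d : ℂ) * χ d * (nu (n / d) : ℂ) *
              (starRingEnd ℂ) (χ (n / d))
        else 0 := by
  let a' : ℕ →* ℝ := ⟨⟨a, ha1⟩, hamul⟩
  let χ' : ℕ →* ℂ := ⟨⟨χ, hχ1⟩, hχmul⟩
  let χbar : ℕ →* ℂ := (starRingEnd ℂ).toMonoidHom.comp χ'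
  set P : ℂ := ∑ p ∈ I, divSqrtHom a' χ' p
  have hconj : (starRingEnd ℂ) P = ∑ p ∈ I, divSqrtHom a' χbar p := by
    simp [P, divSqrtHom, χbar, a', χ']
  have hre : ((2 * k * P.re : ℝ) : ℂ) = k * P + k * (starRingEnd ℂ) P := by
    rw [← mul_add, Complex.add_conj]; push_cast; ring
  have hpow (r : ℕ) : ((k : ℂ) * P) ^ r / r ! =
      ∑ d ∈ smoothOfDegree I r, (k : ℂ) ^ Ω d * nu d * divSqrtHom a' χ' d :=
    pow_div_factorial_eq_sum_smoothOfDegree hI _ _ r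
  rw [tsum_ite_eq_sum_smoothOfDegree hI]
  calc ((∑ j ∈ range (ℓ + 1), (2 * k * P.re) ^ j / j ! : ℝ) : ℂ)
      = ∑ j ∈ range (ℓ + 1), (k * P + k * (starRingEnd ℂ) P) ^ j / j ! := by
        simp only [Complex.ofReal_sum, Complex.ofReal_div, Complex.ofReal_pow, hre,
          Complex.ofReal_natCast]
    _ = ∑ j ∈ range (ℓ + 1), ∑ m ∈ antidiagonal j,
          (∑ d ∈ smoothOfDegree I m.1, (k : ℂ) ^ Ω d * nu d * divSqrtHom a' χ' d) *
            ∑ e ∈ smoothOfDegree I m.2, (k : ℂ) ^ Ω e * nu e * divSqrtHom a' χbar e := by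
        simp_rw [add_pow_div_factorial, hpow, hconj, pow_div_factorial_eq_sum_smoothOfDegree hI]
    _ = _ := by
        simp_rw [← sum_smoothOfDegree_divisorsAntidiagonal hI]
        exact sum_congr rfl fun j _ => sum_congr rfl fun n hn =>
          (mul_sum_divisors_eq_sum_divisorsAntidiagonal a' χ' k
            ((mem_smoothOfDegree hI).1 hn).1).symm

/-- For a finite set `I` of primes, a real-valued completely multiplicative `a`,
a completely multiplicative `χ` with unit-circle values, and any nonzero real `k`
and even positive integer `ℓ`:
`E_ℓ(2k Re P_I(χ;a)) = ∑_{p|n⇒p∈I, Ω(n)≤ℓ} k^{Ω(n)} a(n)/√n ⬝ (νχ ∗ ν conj χ)(n)`. -/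
theorem stmt9 (I : Finset ℕ) (hI : ∀ p ∈ I, p.Prime)
    (a : ℕ → ℝ) (ha1 : a 1 = 1) (hamul : ∀ m n : ℕ, a (m * n) = a m * a n)
    (χ : ℕ → ℂ) (hχ1 : χ 1 = 1) (hχmul : ∀ m n : ℕ, χ (m * n) = χ m * χ n)
    (hχunit : ∀ n : ℕ, n ≠ 0 → ‖χ n‖ = 1)
    (k : ℝ) (hk : k ≠ 0) (ℓ : ℕ) (hℓ : 0 < ℓ) (hev : Even ℓ) :
    ((∑ j ∈ Finset.range (ℓ + 1),
        (2 * k * (∑ p ∈ I, (a p : ℂ) * χ p / (Real.sqrt p : ℂ)).re) ^ j /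
          (Nat.factorial j) : ℝ) : ℂ)
      = ∑' n : ℕ, if 0 < n ∧ (∀ p : ℕ, p.Prime → p ∣ n → p ∈ I) ∧ Ω n ≤ ℓ then
          ((k ^ (Ω n) * a n : ℝ) : ℂ) / (Real.sqrt n : ℂ) *
            ∑ d ∈ n.divisors, (nu d : ℂ) * χ d * (nu (n / d) : ℂ) *
              (starRingEnd ℂ) (χ (n / d))
        else 0 :=
  stmt9_general I hI a ha1 hamul χ hχ1 hχmul k ℓ
end
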